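/- arXiv:1002.0661 — 2 statements merged into one kernel-verified Lean document; each statement's English description precedes it below -/
import Mathlib

section
/- For every m ≥ 1, the join graph obtained from the disjoint union of an edgeless graph on 2 vertices and the complete graph K_{2m} by adding all edges between the two parts has property E(m-1,1). -/
/-!
A matching `M` of size `m - 1` leaves exactly four of the `2m + 2` vertices uncovered. Of the six
pairs of these four vertices, at most two are unusable: the forbidden edge and the one non-edge
between the two independent vertices. The three ways of pairing four vertices use disjoint sets
of pairs, so one of them avoids both and completes `M` to the required perfect matching.
-/

/-- `M` is a matching of the simple graph `G`, given as a finite set of edges: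
every edge of `M` is an edge of `G`, and distinct edges of `M` share no vertex. -/
def IsMatchingSet {V : Type*} (G : SimpleGraph V) (M : Finset (Sym2 V)) : Prop :=
  (∀ e ∈ M, e ∈ G.edgeSet) ∧
  ∀ e ∈ M, ∀ f ∈ M, e ≠ f → ∀ v : V, v ∈ e → v ∉ f

/-- `F` is a perfect matching of `G`: a matching covering every vertex. -/
def IsPerfectMatchingSet {V : Type*} (G : SimpleGraph V) (F : Finset (Sym2 V)) : Prop :=
  IsMatchingSet G F ∧ ∀ v : V, ∃ e ∈ F, v ∈ e

/-- `G` has property `E(m,n)`: `G` is connected, has at least `2m+2n+2` vertices, and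
for any two disjoint matchings `M`, `N` of sizes `m` and `n` respectively, there is a
perfect matching `F` with `M ⊆ F` and `N ∩ F = ∅`. -/
def PropE {V : Type*} [Fintype V] (G : SimpleGraph V) (m n : ℕ) : Prop :=
  G.Connected ∧ 2 * m + 2 * n + 2 ≤ Fintype.card V ∧
  ∀ M N : Finset (Sym2 V), IsMatchingSet G M → IsMatchingSet G N →
    M.card = m → N.card = n → Disjoint M N →
    ∃ F : Finset (Sym2 V), IsPerfectMatchingSet G F ∧ M ⊆ F ∧ Disjoint N F

/-- The join of the edgeless graph on `2` vertices (the left summand `Fin 2`) with the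
complete graph `K_{2m}` (the right summand `Fin (2*m)`): two vertices are adjacent iff
they are distinct and not both in the left part. -/
def JoinGraph (m : ℕ) : SimpleGraph (Fin 2 ⊕ Fin (2 * m)) where
  Adj a b := a ≠ b ∧ ¬(a.isLeft ∧ b.isLeft)
  symm := ⟨fun a b ⟨h1, h2⟩ => ⟨h1.symm, fun ⟨x, y⟩ => h2 ⟨y, x⟩⟩⟩
  loopless := ⟨fun a h => h.1 rfl⟩

open Finset

section Matching

variable {V : Type*} [DecidableEq V] {G : SimpleGraph V} {M : Finset (Sym2 V)} {x y z w : V}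

def coveredVerts (M : Finset (Sym2 V)) : Finset V := M.biUnion Sym2.toFinset

lemma mem_coveredVerts {v : V} : v ∈ coveredVerts M ↔ ∃ e ∈ M, v ∈ e := by
  simp [coveredVerts]

lemma coveredVerts_insert :
    coveredVerts (insert s(x, y) M) = insert x (insert y (coveredVerts M)) := by
  ext v
  simp [coveredVerts, or_assoc]

lemma IsMatchingSet.card_coveredVerts (hM : IsMatchingSet G M) :
    #(coveredVerts M) = 2 * #M := by
  rw [coveredVerts, card_biUnion, mul_comm, ← smul_eq_mul, ← sum_const]
  · exact sum_congr rfl fun e he =>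
      Sym2.card_toFinset_of_not_isDiag e (G.not_isDiag_of_mem_edgeSet (hM.1 e he))
  · exact fun e he f hf hef => disjoint_left.mpr fun v hve hvf =>
      hM.2 e he f hf hef v (Sym2.mem_toFinset.mp hve) (Sym2.mem_toFinset.mp hvf)

lemma IsMatchingSet.insert_of_adj (hM : IsMatchingSet G M) (hxy : G.Adj x y)
    (hx : x ∉ coveredVerts M) (hy : y ∉ coveredVerts M) :
    IsMatchingSet G (insert s(x, y) M) := by
  have hfree : ∀ f ∈ M, ∀ v ∈ s(x, y), v ∉ f := by
    rintro f hf v hv hvf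
    rcases Sym2.mem_iff.mp hv with rfl | rfl
    exacts [hx (mem_coveredVerts.mpr ⟨f, hf, hvf⟩), hy (mem_coveredVerts.mpr ⟨f, hf, hvf⟩)]
  refine ⟨?_, ?_⟩
  · simp only [mem_insert, forall_eq_or_imp]
    exact ⟨hxy, hM.1⟩
  · simp only [mem_insert]
    rintro e (rfl | he) f (rfl | hf) hef v hve hvf
    exacts [hef rfl, hfree f hf v hve hvf, hfree e he v hvf hve, hM.2 e he f hf hef v hve hvf]

lemma IsMatchingSet.isPerfectMatchingSet_insert_insert [Fintype V] (hM : IsMatchingSet G M)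
    (hxyzw : ({x, y, z, w} : Finset V) = (coveredVerts M)ᶜ)
    (hxz : x ≠ z) (hxw : x ≠ w) (hyz : y ≠ z) (hyw : y ≠ w)
    (hxy : G.Adj x y) (hzw : G.Adj z w) :
    IsPerfectMatchingSet G (insert s(x, y) (insert s(z, w) M)) := by
  have hfree : ∀ v ∈ ({x, y, z, w} : Finset V), v ∉ coveredVerts M := by
    simp [hxyzw]
  refine ⟨(hM.insert_of_adj hzw (hfree z (by simp)) (hfree w (by simp))).insert_of_adj hxy ?_ ?_,
    fun v => ?_⟩
  · simp [coveredVerts_insert, hxz, hxw, hfree x]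
  · simp [coveredVerts_insert, hyz, hyw, hfree y]
  · have hv : v ∈ ({x, y, z, w} : Finset V) ∨ v ∈ coveredVerts M := by
      rw [hxyzw, mem_compl]
      exact (em _).symm
    rw [← mem_coveredVerts, coveredVerts_insert, coveredVerts_insert]
    simpa [or_assoc] using hv

end Matching

lemma exists_pairing_avoiding {V : Type*} [DecidableEq V] {U : Finset V} (hU : #U = 4)
    (b₁ b₂ : Sym2 V) :
    ∃ x y z w : V, ({x, y, z, w} : Finset V) = U ∧
      x ≠ y ∧ x ≠ z ∧ x ≠ w ∧ y ≠ z ∧ y ≠ w ∧ z ≠ w ∧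
      s(x, y) ≠ b₁ ∧ s(x, y) ≠ b₂ ∧ s(z, w) ≠ b₁ ∧ s(z, w) ≠ b₂ := by
  obtain ⟨p, U', hpU', rfl, hU'⟩ := card_eq_succ.mp hU
  obtain ⟨q, r, s, hqr, hqs, hrs, rfl⟩ := card_eq_three.mp hU'
  simp only [mem_insert, mem_singleton, not_or] at hpU'
  obtain ⟨hpq, hpr, hps⟩ := hpU'
  by_cases h₁ : s(p, q) ≠ b₁ ∧ s(p, q) ≠ b₂ ∧ s(r, s) ≠ b₁ ∧ s(r, s) ≠ b₂
  · exact ⟨p, q, r, s, rfl, hpq, hpr, hps, hqr, hqs, hrs, h₁⟩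
  by_cases h₂ : s(p, r) ≠ b₁ ∧ s(p, r) ≠ b₂ ∧ s(q, s) ≠ b₁ ∧ s(q, s) ≠ b₂
  · exact ⟨p, r, q, s, by rw [insert_comm r q], hpr, hpq, hps, hqr.symm, hrs, hqs, h₂⟩
  refine ⟨p, s, q, r, by rw [insert_comm s q, pair_comm s r], hps, hpq, hpr, hqs.symm,
    hrs.symm, hqr, ?_⟩
  grind [Sym2.eq_iff]

lemma joinGraph_connected {m : ℕ} (hm : 0 < m) : (JoinGraph m).Connected := by
  refine (SimpleGraph.connected_iff_exists_forall_reachable _).mpr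
    ⟨.inr ⟨0, by omega⟩, fun v => ?_⟩
  by_cases hv : v = .inr ⟨0, by omega⟩
  · rw [hv]
  · exact SimpleGraph.Adj.reachable ⟨Ne.symm hv, by simp⟩

lemma joinGraph_adj_of_ne {m : ℕ} {a b : Fin 2 ⊕ Fin (2 * m)} (hab : a ≠ b)
    (hab' : s(a, b) ≠ s(.inl 0, .inl 1)) : (JoinGraph m).Adj a b := by
  refine ⟨hab, ?_⟩
  rintro ⟨ha, hb⟩
  obtain ⟨a, rfl⟩ := Sum.isLeft_iff.mp ha
  obtain ⟨b, rfl⟩ := Sum.isLeft_iff.mp hb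
  fin_cases a <;> fin_cases b <;> simp_all [Sym2.eq_swap]

/-- For every `m ≥ 1`, the join of the edgeless graph on two vertices with `K_{2m}`
has property `E(m-1, 1)`. -/
theorem joinGraph_propE (m : ℕ) (hm : 1 ≤ m) : PropE (JoinGraph m) (m - 1) 1 := by
  refine ⟨joinGraph_connected hm, by simp only [Fintype.card_sum, Fintype.card_fin]; omega, ?_⟩
  intro M N hM _ hMcard hNcard hMN
  obtain ⟨e₀, rfl⟩ := card_eq_one.mp hNcard
  have hU : #(coveredVerts M)ᶜ = 4 := by
    rw [card_compl, hM.card_coveredVerts, hMcard]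
    simp only [Fintype.card_sum, Fintype.card_fin]
    omega
  -- `s(inl 0, inl 1)` is the only pair of distinct vertices that is not an edge.
  obtain ⟨x, y, z, w, hxyzw, hxy, hxz, hxw, hyz, hyw, hzw, hxy₁, hxy₀, hzw₁, hzw₀⟩ :=
    exists_pairing_avoiding hU s(.inl 0, .inl 1) e₀
  refine ⟨_, IsMatchingSet.isPerfectMatchingSet_insert_insert hM hxyzw hxz hxw hyz hyw
    (joinGraph_adj_of_ne hxy hxy₁) (joinGraph_adj_of_ne hzw hzw₁),
    (subset_insert _ M).trans (subset_insert _ _), ?_⟩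
  have he₀ : e₀ ∉ M := disjoint_singleton_right.mp hMN
  simp [Ne.symm hxy₀, Ne.symm hzw₀, he₀]
end

section
/- For every m ≥ 1, the join graph obtained from the disjoint union of an edgeless graph on 2 vertices and the complete graph K_{2m} by adding all edges between the two parts is not m-extendable; that is, it does not have property E(m,0). -/
/-- `G` is `m`-extendable (has property `E(m,0)`): `G` is connected, has at least
`2m+2` vertices, and every matching of size `m` is contained in a perfect matching. -/
def MExtendable {V : Type*} [Fintype V] (G : SimpleGraph V) (m : ℕ) : Prop :=
  G.Connected ∧ 2 * m + 2 ≤ Fintype.card V ∧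
  ∀ M : Finset (Sym2 V), IsMatchingSet G M → M.card = m →
    ∃ F : Finset (Sym2 V), IsPerfectMatchingSet G F ∧ M ⊆ F

-- The witness is the partner of `v` in `F`.
theorem IsPerfectMatchingSet.exists_adj_forall_not_mem {V : Type*} {G : SimpleGraph V}
    {F M : Finset (Sym2 V)} (hF : IsPerfectMatchingSet G F) (hMF : M ⊆ F) {v : V}
    (hv : ∀ e ∈ M, v ∉ e) : ∃ w, G.Adj v w ∧ ∀ e ∈ M, w ∉ e := by
  obtain ⟨⟨hFG, hFdisj⟩, hFcov⟩ := hF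
  obtain ⟨e, heF, hve⟩ := hFcov v
  obtain ⟨w, rfl⟩ := Sym2.mem_iff_exists.mp hve
  refine ⟨w, hFG _ heF, fun e' he' hwe' => ?_⟩
  have hne : s(v, w) ≠ e' := fun h => hv e' he' (h ▸ Sym2.mem_mk_left v w)
  exact hFdisj _ heF e' (hMF he') hne w (Sym2.mem_mk_right v w) hwe'

namespace JoinGraph

def rightPair (m : ℕ) (i : Fin m) : Sym2 (Fin 2 ⊕ Fin (2 * m)) :=
  s(.inr ⟨2 * i, by omega⟩, .inr ⟨2 * i + 1, by omega⟩)

theorem inl_not_mem_rightPair {m : ℕ} (a : Fin 2) (i : Fin m) :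
    Sum.inl a ∉ rightPair m i := by
  simp [rightPair]

theorem inr_mem_rightPair_iff {m : ℕ} (j : Fin (2 * m)) (i : Fin m) :
    Sum.inr j ∈ rightPair m i ↔ (j : ℕ) / 2 = i := by
  simp only [rightPair, Sym2.mem_iff, Sum.inr.injEq, Fin.ext_iff]
  omega

theorem rightPair_mem_edgeSet {m : ℕ} (i : Fin m) : rightPair m i ∈ (JoinGraph m).edgeSet := by
  simp [rightPair, JoinGraph]

theorem eq_of_mem_rightPair {m : ℕ} {i i' : Fin m} {v : Fin 2 ⊕ Fin (2 * m)}
    (hv : v ∈ rightPair m i) (hv' : v ∈ rightPair m i') : i = i' := by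
  rcases v with a | j
  · exact absurd hv (inl_not_mem_rightPair a i)
  · rw [inr_mem_rightPair_iff] at hv hv'
    exact Fin.ext (hv.symm.trans hv')

theorem rightPair_injective (m : ℕ) : Function.Injective (rightPair m) := fun _ _ h =>
  eq_of_mem_rightPair (Sym2.mem_mk_left _ _) (h ▸ Sym2.mem_mk_left _ _)

def rightPairs (m : ℕ) : Finset (Sym2 (Fin 2 ⊕ Fin (2 * m))) :=
  Finset.univ.image (rightPair m)

theorem card_rightPairs (m : ℕ) : (rightPairs m).card = m := by
  rw [rightPairs, Finset.card_image_of_injective _ (rightPair_injective m), Finset.card_univ,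
    Fintype.card_fin]

theorem isMatchingSet_rightPairs (m : ℕ) : IsMatchingSet (JoinGraph m) (rightPairs m) := by
  simp only [IsMatchingSet, rightPairs, Finset.forall_mem_image]
  refine ⟨fun i _ => rightPair_mem_edgeSet i, fun _ _ _ _ hne _ hv hv' => ?_⟩
  exact hne (congrArg _ (eq_of_mem_rightPair hv hv'))

end JoinGraph

open JoinGraph in
theorem joinGraph_not_mExtendable_general (m : ℕ) : ¬ MExtendable (JoinGraph m) m := by
  rintro ⟨-, -, hext⟩
  obtain ⟨F, hF, hMF⟩ := hext _ (isMatchingSet_rightPairs m) (card_rightPairs m)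
  have hleft : ∀ e ∈ rightPairs m, Sum.inl 0 ∉ e := by
    simpa [rightPairs] using inl_not_mem_rightPair 0
  obtain ⟨w, hadj, hw⟩ := hF.exists_adj_forall_not_mem hMF hleft
  rcases w with _ | j
  · exact hadj.2 ⟨rfl, rfl⟩
  · have hjm : (j : ℕ) / 2 < m := by omega
    exact hw _ (Finset.mem_image_of_mem _ (Finset.mem_univ ⟨j / 2, hjm⟩))
      ((inr_mem_rightPair_iff j _).mpr rfl)

/-- For every `m ≥ 1`, the join of the edgeless graph on two vertices with `K_{2m}`
is not `m`-extendable, i.e. does not have property `E(m,0)`. -/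
theorem joinGraph_not_mExtendable (m : ℕ) (hm : 1 ≤ m) : ¬ MExtendable (JoinGraph m) m :=
  joinGraph_not_mExtendable_general m
end
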